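/- arXiv:1903.06069 — 2 statements merged into one kernel-verified Lean document; each statement's English description precedes it below -/
import Mathlib

section
/- Let y ∈ Y_{Q,n} and α be a root with coroot α∨. Then n_α divides ⟨y, α⟩, where n_α = n / gcd(n, Q(α∨)). Consequently ⟨y,α⟩·α∨ ∈ Y_{Q,n}^{sc}, the sublattice generated by the elements n_β β∨. -/
theorem Int.ediv_gcd_dvd_of_dvd_mul {a b c : ℤ} (ha : a ≠ 0) (h : a ∣ b * c) :
    a / a.gcd b ∣ c := by
  have hg : 0 < a.gcd b := Int.gcd_pos_of_ne_zero_left b ha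
  have ha' : a / a.gcd b * a.gcd b = a := Int.ediv_mul_cancel (Int.gcd_dvd_left a b)
  have hb' : b / a.gcd b * a.gcd b = b := Int.ediv_mul_cancel (Int.gcd_dvd_right a b)
  have h' : a / a.gcd b ∣ b / a.gcd b * c := by
    refine (mul_dvd_mul_iff_right (Int.natCast_ne_zero.mpr hg.ne')).mp ?_
    rwa [ha', mul_right_comm, hb']
  exact Int.dvd_of_dvd_mul_right_of_gcd_one h' (Int.gcd_div_gcd_div_gcd hg)

theorem Int.natCast_div_gcd_dvd_of_dvd_mul {n : ℕ} {b c : ℤ} (hn : 0 < n) (h : (n : ℤ) ∣ b * c) :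
    ((n / Int.gcd n b : ℕ) : ℤ) ∣ c := by
  rw [Int.natCast_div]
  exact Int.ediv_gcd_dvd_of_dvd_mul (by positivity) h

/-- For `y ∈ Y_{Q,n}` and a root `α` with coroot `α∨`, the integer
`n_α = n / gcd(n, Q(α∨))` divides `⟨y,α⟩`; consequently `⟨y,α⟩ • α∨` lies in
`Y_{Q,n}^{sc}`, the span of the elements `n_β • β∨`. -/
theorem stmt1 {Y ι : Type*} [AddCommGroup Y] [Module ℤ Y]
    (B : Y →ₗ[ℤ] Y →ₗ[ℤ] ℤ) (Q : Y → ℤ)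
    (coroot : ι → Y) (pair : Y → ι → ℤ)
    (hBQ : ∀ (y : Y) (i : ι), B y (coroot i) = Q (coroot i) * pair y i)
    (n : ℕ) (hn : 0 < n)
    (y : Y) (hy : ∀ y' : Y, (n : ℤ) ∣ B y y')
    (α : ι) :
    ((n / Int.gcd (n : ℤ) (Q (coroot α)) : ℕ) : ℤ) ∣ pair y α ∧
      pair y α • coroot α ∈
        Submodule.span ℤ
          (Set.range fun i : ι =>
            ((n / Int.gcd (n : ℤ) (Q (coroot i)) : ℕ) : ℤ) • coroot i) := by
  have hdvd : ((n / Int.gcd (n : ℤ) (Q (coroot α)) : ℕ) : ℤ) ∣ pair y α :=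
    Int.natCast_div_gcd_dvd_of_dvd_mul hn (hBQ y α ▸ hy (coroot α))
  refine ⟨hdvd, ?_⟩
  obtain ⟨k, hk⟩ := hdvd
  rw [hk, mul_comm, mul_zsmul]
  exact zsmul_mem (Submodule.subset_span (Set.mem_range_self α)) k
end

section
/- Let n be coprime to 3 and consider the quotient 𝒳 = (ℤ/n)α₁∨ ⊕ (ℤ/n)α₂∨ of the SL₃ coroot lattice with the twisted action of W = S₃ given by w[y] = w(y − ρ) + ρ. Then the character of the permutation representation σ_𝒳 takes values: n² at the identity, n at each simple reflection and at the longest element w_G, and 1 at each of the two 3-cycles. Consequently ⟨σ_𝒳, 𝟙⟩ = (n²+3n+2)/6, ⟨σ_𝒳, ε⟩ = (n²−3n+2)/6, and ⟨σ_𝒳, σ₀⟩ = (n²−1)/3 where σ₀ is the 2-dimensional irreducible. -/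
/-- The twisted action of the simple reflection `w₁` of `SL₃` on
`𝒳 = (ℤ/n)α₁∨ ⊕ (ℤ/n)α₂∨`: `w₁[a α₁∨ + b α₂∨] = (b−a+1) α₁∨ + b α₂∨`
(from `w₁(α₁∨) = −α₁∨`, `w₁(α₂∨) = α₁∨+α₂∨`, `ρ = α₁∨+α₂∨`, `w[y] = w(y−ρ)+ρ`). -/
def sl3t1 (n : ℕ) : ZMod n × ZMod n → ZMod n × ZMod n :=
  fun p => (p.2 - p.1 + 1, p.2)

/-- The twisted action of the simple reflection `w₂` of `SL₃`:
`w₂[a α₁∨ + b α₂∨] = a α₁∨ + (a−b+1) α₂∨`. -/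
def sl3t2 (n : ℕ) : ZMod n × ZMod n → ZMod n × ZMod n :=
  fun p => (p.1, p.1 - p.2 + 1)

lemma graph_ncard (n : ℕ) (f : ZMod n → ZMod n) :
    Set.ncard {p : ZMod n × ZMod n | p.2 = f p.1} = n := by
  have e : {p : ZMod n × ZMod n | p.2 = f p.1} ≃ ZMod n :=
    { toFun := fun p => p.1.1
      invFun := fun a => ⟨(a, f a), rfl⟩
      left_inv := by rintro ⟨⟨a, b⟩, h⟩; simp only [Set.mem_setOf_eq] at h; subst h; rfl
      right_inv := fun a => rfl }
  rw [← Nat.card_coe_set_eq, Nat.card_congr e, Nat.card_zmod]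

lemma graph_ncard' (n : ℕ) (f : ZMod n → ZMod n) :
    Set.ncard {p : ZMod n × ZMod n | p.1 = f p.2} = n := by
  have e : {p : ZMod n × ZMod n | p.1 = f p.2} ≃ ZMod n :=
    { toFun := fun p => p.1.2
      invFun := fun b => ⟨(f b, b), rfl⟩
      left_inv := by rintro ⟨⟨a, b⟩, h⟩; simp only [Set.mem_setOf_eq] at h; subst h; rfl
      right_inv := fun b => rfl }
  rw [← Nat.card_coe_set_eq, Nat.card_congr e, Nat.card_zmod]

/-- For `n` coprime to `3`, the character of the permutation
representation `σ_𝒳` of `W = S₃` on `𝒳 = (ℤ/n)²` (twisted action) takes the values: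
`n²` at the identity, `n` at each simple reflection and at the longest element
`w_G = w₁w₂w₁`, and `1` at each of the two `3`-cycles `w₁w₂`, `w₂w₁`.  Consequently
`⟨σ_𝒳, 𝟙⟩ = (n²+3n+2)/6`, `⟨σ_𝒳, ε⟩ = (n²−3n+2)/6` and `⟨σ_𝒳, σ₀⟩ = (n²−1)/3`
(where `σ₀` is the 2-dimensional irreducible of `S₃`, with character `2, 0, −1` on the
identity, reflections and 3-cycles respectively). -/
theorem stmt16 (n : ℕ) (hn : 0 < n) (h3 : Nat.Coprime n 3) :
    Set.ncard (Set.univ : Set (ZMod n × ZMod n)) = n ^ 2 ∧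
    Set.ncard {p : ZMod n × ZMod n | sl3t1 n p = p} = n ∧
    Set.ncard {p : ZMod n × ZMod n | sl3t2 n p = p} = n ∧
    Set.ncard {p : ZMod n × ZMod n | sl3t1 n (sl3t2 n p) = p} = 1 ∧
    Set.ncard {p : ZMod n × ZMod n | sl3t2 n (sl3t1 n p) = p} = 1 ∧
    Set.ncard {p : ZMod n × ZMod n | sl3t1 n (sl3t2 n (sl3t1 n p)) = p} = n ∧
    -- ⟨σ_𝒳, 𝟙⟩ = (n²+3n+2)/6
    ((1 : ℚ) / 6) *
        ((Set.ncard (Set.univ : Set (ZMod n × ZMod n)) : ℚ)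
          + (Set.ncard {p : ZMod n × ZMod n | sl3t1 n p = p} : ℚ)
          + (Set.ncard {p : ZMod n × ZMod n | sl3t2 n p = p} : ℚ)
          + (Set.ncard {p : ZMod n × ZMod n | sl3t1 n (sl3t2 n (sl3t1 n p)) = p} : ℚ)
          + (Set.ncard {p : ZMod n × ZMod n | sl3t1 n (sl3t2 n p) = p} : ℚ)
          + (Set.ncard {p : ZMod n × ZMod n | sl3t2 n (sl3t1 n p) = p} : ℚ))
      = ((n : ℚ) ^ 2 + 3 * n + 2) / 6 ∧
    -- ⟨σ_𝒳, ε⟩ = (n²−3n+2)/6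
    ((1 : ℚ) / 6) *
        ((Set.ncard (Set.univ : Set (ZMod n × ZMod n)) : ℚ)
          - (Set.ncard {p : ZMod n × ZMod n | sl3t1 n p = p} : ℚ)
          - (Set.ncard {p : ZMod n × ZMod n | sl3t2 n p = p} : ℚ)
          - (Set.ncard {p : ZMod n × ZMod n | sl3t1 n (sl3t2 n (sl3t1 n p)) = p} : ℚ)
          + (Set.ncard {p : ZMod n × ZMod n | sl3t1 n (sl3t2 n p) = p} : ℚ)
          + (Set.ncard {p : ZMod n × ZMod n | sl3t2 n (sl3t1 n p) = p} : ℚ))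
      = ((n : ℚ) ^ 2 - 3 * n + 2) / 6 ∧
    -- ⟨σ_𝒳, σ₀⟩ = (n²−1)/3
    ((1 : ℚ) / 6) *
        (2 * (Set.ncard (Set.univ : Set (ZMod n × ZMod n)) : ℚ)
          - (Set.ncard {p : ZMod n × ZMod n | sl3t1 n (sl3t2 n p) = p} : ℚ)
          - (Set.ncard {p : ZMod n × ZMod n | sl3t2 n (sl3t1 n p) = p} : ℚ))
      = ((n : ℚ) ^ 2 - 1) / 3 := by

  haveI : NeZero n := ⟨hn.ne'⟩
  have h3u : IsUnit (3 : ZMod n) := by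
    have := (ZMod.isUnit_iff_coprime 3 n).mpr h3.symm
    simpa using this
  have hU : Set.ncard (Set.univ : Set (ZMod n × ZMod n)) = n ^ 2 := by
    rw [Set.ncard_univ, Nat.card_prod, Nat.card_zmod]; ring
  have h1 : Set.ncard {p : ZMod n × ZMod n | sl3t1 n p = p} = n := by
    have hs : {p : ZMod n × ZMod n | sl3t1 n p = p}
        = {p : ZMod n × ZMod n | p.2 = 2 * p.1 - 1} := by
      ext ⟨a, b⟩
      simp only [sl3t1, Set.mem_setOf_eq, Prod.mk.injEq]
      constructor
      · rintro ⟨h, -⟩; linear_combination h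
      · intro h; exact ⟨by linear_combination h, trivial⟩
    rw [hs]; exact graph_ncard n (fun x => 2 * x - 1)
  have h2 : Set.ncard {p : ZMod n × ZMod n | sl3t2 n p = p} = n := by
    have hs : {p : ZMod n × ZMod n | sl3t2 n p = p}
        = {p : ZMod n × ZMod n | p.1 = 2 * p.2 - 1} := by
      ext ⟨a, b⟩
      simp only [sl3t2, Set.mem_setOf_eq, Prod.mk.injEq]
      constructor
      · rintro ⟨-, h⟩; linear_combination h
      · intro h; exact ⟨trivial, by linear_combination h⟩
    rw [hs]; exact graph_ncard' n (fun x => 2 * x - 1)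
  have h12 : Set.ncard {p : ZMod n × ZMod n | sl3t1 n (sl3t2 n p) = p} = 1 := by
    have hs : {p : ZMod n × ZMod n | sl3t1 n (sl3t2 n p) = p} = {((1 : ZMod n), (1 : ZMod n))} := by
      ext ⟨a, b⟩
      simp only [sl3t1, sl3t2, Set.mem_setOf_eq, Set.mem_singleton_iff, Prod.mk.injEq]
      constructor
      · rintro ⟨ha, hb⟩
        have hb1 : (3 : ZMod n) * b = 3 * 1 := by linear_combination -ha - hb
        have hb' : b = 1 := h3u.mul_left_cancel hb1
        subst hb'
        refine ⟨?_, rfl⟩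
        linear_combination -ha
      · rintro ⟨ha, hb⟩; subst ha; subst hb; norm_num
    rw [hs, Set.ncard_singleton]
  have h21 : Set.ncard {p : ZMod n × ZMod n | sl3t2 n (sl3t1 n p) = p} = 1 := by
    have hs : {p : ZMod n × ZMod n | sl3t2 n (sl3t1 n p) = p} = {((1 : ZMod n), (1 : ZMod n))} := by
      ext ⟨a, b⟩
      simp only [sl3t1, sl3t2, Set.mem_setOf_eq, Set.mem_singleton_iff, Prod.mk.injEq]
      constructor
      · rintro ⟨ha, hb⟩
        have ha1 : (3 : ZMod n) * a = 3 * 1 := by linear_combination -ha - hb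
        have ha' : a = 1 := h3u.mul_left_cancel ha1
        subst ha'
        refine ⟨rfl, ?_⟩
        linear_combination -hb
      · rintro ⟨ha, hb⟩; subst ha; subst hb; norm_num
    rw [hs, Set.ncard_singleton]
  have h121 : Set.ncard {p : ZMod n × ZMod n | sl3t1 n (sl3t2 n (sl3t1 n p)) = p} = n := by
    have hs : {p : ZMod n × ZMod n | sl3t1 n (sl3t2 n (sl3t1 n p)) = p}
        = {p : ZMod n × ZMod n | p.2 = 2 - p.1} := by
      ext ⟨a, b⟩
      simp only [sl3t1, sl3t2, Set.mem_setOf_eq, Prod.mk.injEq]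
      constructor
      · rintro ⟨h, -⟩; linear_combination -h
      · intro h; exact ⟨by linear_combination -h, by linear_combination -h⟩
    rw [hs]; exact graph_ncard n (fun x => 2 - x)
  refine ⟨hU, h1, h2, h12, h21, h121, ?_, ?_, ?_⟩ <;>
    simp only [hU, h1, h2, h12, h21, h121] <;> push_cast <;> ring
end
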